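/- Let {T(t)}_{t≥0} be a c₀ α-fractional semigroup on a Banach space X (0 < α ≤ 1) with α-infinitesimal generator A, and suppose t ↦ T(t) is continuously α-differentiable. Then for every x ∈ D(A) and t > 0, T^{(α)}(t)x = T(t)Ax = AT(t)x. -/

import Mathlib

/-! For fixed `t > 0` put `φ s = (t ^ α + s ^ α) ^ (1 / α)`. The semigroup law gives
`T (φ s) = T t ∘ T s = T s ∘ T t`, and since `φ' s * φ s ^ (α - 1) = s ^ (α - 1)`,
differentiating `s ↦ T (φ s) x` in two ways yields `T' (φ s) x = T t (T' s x) = T' s (T t x)`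
for `s > 0`. As `s → 0⁺`, `φ s → t`, and continuity of `T'` together with `T' s x → Ax`
gives the result. -/

open Filter Topology Set Real

/-- Vector-valued conformable fractional derivative of order `α` at `t`. -/
def HasConfDerivAt {X : Type*} [NormedAddCommGroup X] [NormedSpace ℝ X]
    (α : ℝ) (f : ℝ → X) (t : ℝ) (L : X) : Prop :=
  Filter.Tendsto (fun ε : ℝ => (ε : ℝ)⁻¹ • (f (t + ε * t ^ (1 - α)) - f t)) (𝓝[≠] 0) (𝓝 L)

noncomputable def rpowSum (α s t : ℝ) : ℝ := (s ^ α + t ^ α) ^ (1 / α)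

theorem rpowSum_comm (α s t : ℝ) : rpowSum α s t = rpowSum α t s := by
  rw [rpowSum, rpowSum, add_comm]

theorem rpowSum_pos {α s t : ℝ} (hs : 0 ≤ s) (ht : 0 < t) : 0 < rpowSum α s t :=
  Real.rpow_pos_of_pos (by positivity) _

theorem rpowSum_zero_right {α : ℝ} (hα : 0 < α) {s : ℝ} (hs : 0 ≤ s) : rpowSum α s 0 = s := by
  rw [rpowSum, Real.zero_rpow hα.ne', add_zero, one_div, Real.rpow_rpow_inv hs hα.ne']

theorem hasDerivAt_rpowSum {α s t : ℝ} (hα : α ≠ 0) (hs : 0 ≤ s) (ht : 0 < t) :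
    HasDerivAt (rpowSum α s) (t ^ (α - 1) * rpowSum α s t ^ (1 - α)) t := by
  have hpos : 0 < s ^ α + t ^ α := by positivity
  have hinner : HasDerivAt (fun u => s ^ α + u ^ α) (α * t ^ (α - 1)) t :=
    (Real.hasDerivAt_rpow_const (Or.inl ht.ne')).const_add _
  have hcomp := (Real.hasDerivAt_rpow_const (p := 1 / α) (Or.inl hpos.ne')).comp t hinner
  refine hcomp.congr_deriv ?_
  rw [rpowSum, ← Real.rpow_mul hpos.le, mul_one_sub, one_div_mul_cancel hα]
  field_simp

theorem tendsto_rpowSum_nhdsGT_zero {α s : ℝ} (hα : 0 < α) (hs : 0 < s) :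
    Tendsto (rpowSum α s) (𝓝[>] 0) (𝓝[Ioi 0] s) := by
  have hcont : ContinuousAt (rpowSum α s) 0 :=
    (continuousAt_const.add (continuousAt_id.rpow_const (Or.inr hα.le))).rpow_const
      (Or.inr (by positivity))
  refine tendsto_nhdsWithin_iff.2
    ⟨?_, eventually_nhdsWithin_of_forall fun u hu => rpowSum_pos hs.le hu⟩
  simpa [rpowSum_zero_right hα hs.le] using hcont.tendsto.mono_left nhdsWithin_le_nhds

section ConformableDerivative

variable {X : Type*} [NormedAddCommGroup X] [NormedSpace ℝ X] {α : ℝ}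
  {T : ℝ → X →L[ℝ] X} {T' : ℝ → X → X}

theorem HasDerivAt.eq_of_smul {g : ℝ → X} {c s : ℝ} {a b : X} (hc : c ≠ 0)
    (ha : HasDerivAt g (c • a) s) (hb : HasDerivAt g (c • b) s) : a = b :=
  smul_right_injective X hc (ha.unique hb)

theorem HasConfDerivAt.hasDerivAt {t : ℝ} {f : ℝ → X} {L : X} (h : HasConfDerivAt α f t L)
    (ht : 0 < t) :
    HasDerivAt f (t ^ (α - 1) • L) t := by
  unfold HasConfDerivAt at h
  set c : ℝ := t ^ (1 - α)
  have hc : c ≠ 0 := (Real.rpow_pos_of_pos ht _).ne'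
  have hscale : Tendsto (· * c⁻¹) (𝓝[≠] (0 : ℝ)) (𝓝[≠] 0) :=
    tendsto_nhdsWithin_iff.2
      ⟨by simpa using ((continuous_mul_const c⁻¹).tendsto 0).mono_left nhdsWithin_le_nhds,
        eventually_nhdsWithin_of_forall fun δ hδ => mul_ne_zero hδ (inv_ne_zero hc)⟩
  have hcinv : c⁻¹ = t ^ (α - 1) := by
    rw [← Real.rpow_neg ht.le, neg_sub]
  rw [hasDerivAt_iff_tendsto_slope_zero, ← hcinv]
  refine ((h.comp hscale).const_smul c⁻¹).congr fun δ => ?_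
  have hcoef : c⁻¹ * (δ * c⁻¹)⁻¹ = δ⁻¹ := by field_simp
  simp only [Function.comp_apply, smul_smul, hcoef, inv_mul_cancel_right₀ hc]

theorem HasConfDerivAt.hasDerivAt_comp_rpowSum {s t : ℝ} {f : ℝ → X} {L : X} (hα : α ≠ 0)
    (hs : 0 ≤ s) (ht : 0 < t) (h : HasConfDerivAt α f (rpowSum α s t) L) :
    HasDerivAt (fun u => f (rpowSum α s u)) (t ^ (α - 1) • L) t := by
  have hpos : 0 < rpowSum α s t := rpowSum_pos hs ht
  have hcancel : rpowSum α s t ^ (1 - α) * rpowSum α s t ^ (α - 1) = 1 := by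
    rw [← Real.rpow_add hpos, sub_add_sub_cancel', sub_self, Real.rpow_zero]
  have hcomp := (h.hasDerivAt hpos).scomp t (hasDerivAt_rpowSum hα hs ht)
  rwa [smul_smul, mul_assoc, hcancel, mul_one] at hcomp

theorem apply_rpowSum (hα : α ≠ 0)
    (hlaw : ∀ s ≥ (0:ℝ), ∀ t ≥ (0:ℝ),
      T ((s + t) ^ (1 / α)) = T (s ^ (1 / α)) ∘L T (t ^ (1 / α)))
    {s t : ℝ} (hs : 0 ≤ s) (ht : 0 ≤ t) : T (rpowSum α s t) = T s ∘L T t := by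
  simpa [rpowSum, one_div, Real.rpow_rpow_inv, hs, ht, hα] using
    hlaw (s ^ α) (Real.rpow_nonneg hs α) (t ^ α) (Real.rpow_nonneg ht α)

theorem confDeriv_apply_rpowSum (hα : α ≠ 0)
    (hlaw : ∀ s ≥ (0:ℝ), ∀ t ≥ (0:ℝ), T (rpowSum α s t) = T s ∘L T t)
    (hderiv : ∀ t > (0:ℝ), ∀ x : X, HasConfDerivAt α (fun τ => T τ x) t (T' t x))
    {s t : ℝ} (hs : 0 < s) (ht : 0 < t) (x : X) :
    T' (rpowSum α s t) x = T s (T' t x) ∧ T' (rpowSum α s t) x = T' t (T s x) := by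
  have hsum :
      HasDerivAt (fun u => T (rpowSum α s u) x) (t ^ (α - 1) • T' (rpowSum α s t) x) t :=
    (hderiv _ (rpowSum_pos hs.le ht) x).hasDerivAt_comp_rpowSum hα hs.le ht
  have hc : t ^ (α - 1) ≠ 0 := (Real.rpow_pos_of_pos ht _).ne'
  have hnear : ∀ᶠ u in 𝓝 t, 0 < u := Ioi_mem_nhds ht
  constructor
  · have hleft := (T s).hasFDerivAt.comp_hasDerivAt t ((hderiv t ht x).hasDerivAt ht)
    rw [Function.comp_def, ContinuousLinearMap.map_smul] at hleft
    refine hsum.eq_of_smul hc (hleft.congr_of_eventuallyEq ?_)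
    filter_upwards [hnear] with u hu
    rw [hlaw s hs.le u hu.le, ContinuousLinearMap.comp_apply]
  · refine hsum.eq_of_smul hc
      (((hderiv t ht (T s x)).hasDerivAt ht).congr_of_eventuallyEq ?_)
    filter_upwards [hnear] with u hu
    rw [rpowSum_comm, hlaw u hu.le s hs.le, ContinuousLinearMap.comp_apply]

end ConformableDerivative

theorem conf_semigroup_deriv_commutes_general
    {X : Type*} [NormedAddCommGroup X] [NormedSpace ℝ X]
    (α : ℝ) (hα : α ∈ Set.Ioc (0:ℝ) 1)
    (T : ℝ → (X →L[ℝ] X)) (T' : ℝ → X → X)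
    (hlaw : ∀ s ≥ (0:ℝ), ∀ t ≥ (0:ℝ),
      T ((s + t) ^ (1 / α)) = T (s ^ (1 / α)) ∘L T (t ^ (1 / α)))
    (hderiv : ∀ t > (0:ℝ), ∀ x : X, HasConfDerivAt α (fun τ => T τ x) t (T' t x))
    (hcont : ∀ x : X, ContinuousOn (fun t => T' t x) (Set.Ioi 0))
    (x Ax : X)
    (hgen : Filter.Tendsto (fun t => T' t x) (𝓝[>] 0) (𝓝 Ax))
    (t : ℝ) (ht : 0 < t) :
    T' t x = T t Ax ∧
    Filter.Tendsto (fun s => T' s (T t x)) (𝓝[>] 0) (𝓝 (T' t x)) := by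
  have hα0 : α ≠ 0 := hα.1.ne'
  have hcomm := fun s (hs : 0 < s) =>
    confDeriv_apply_rpowSum hα0 (fun _ hs _ ht => apply_rpowSum hα0 hlaw hs ht) hderiv ht hs x
  have hlim : Tendsto (fun s => T' (rpowSum α t s) x) (𝓝[>] 0) (𝓝 (T' t x)) :=
    (hcont x t ht).tendsto.comp (tendsto_rpowSum_nhdsGT_zero hα.1 ht)
  have hleft : Tendsto (fun s => T' (rpowSum α t s) x) (𝓝[>] 0) (𝓝 (T t Ax)) :=
    ((T t).continuous.tendsto Ax |>.comp hgen).congr' <|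
      eventually_nhdsWithin_of_forall fun s hs => (hcomm s hs).1.symm
  exact ⟨tendsto_nhds_unique hlim hleft,
    hlim.congr' <| eventually_nhdsWithin_of_forall fun s hs => (hcomm s hs).2⟩

/-- For a continuously α-differentiable c₀ α-fractional semigroup `T` with pointwise
conformable derivative `T'` and `x` in the domain of the generator with `A x = Ax`,
one has `T^{(α)}(t) x = T(t) Ax = A T(t) x` (the last equality expressed by saying that
`T(t)x` lies in the domain of the generator with value `T^{(α)}(t)x`). -/
theorem conf_semigroup_deriv_commutes
    {X : Type*} [NormedAddCommGroup X] [NormedSpace ℝ X] [CompleteSpace X]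
    (α : ℝ) (hα : α ∈ Set.Ioc (0:ℝ) 1)
    (T : ℝ → (X →L[ℝ] X)) (T' : ℝ → X → X)
    (hT0 : T 0 = 1)
    (hlaw : ∀ s ≥ (0:ℝ), ∀ t ≥ (0:ℝ),
      T ((s + t) ^ (1 / α)) = T (s ^ (1 / α)) ∘L T (t ^ (1 / α)))
    (hc0 : ∀ x : X, Filter.Tendsto (fun t => T t x) (𝓝[>] 0) (𝓝 x))
    (hderiv : ∀ t > (0:ℝ), ∀ x : X, HasConfDerivAt α (fun τ => T τ x) t (T' t x))
    (hcont : ∀ x : X, ContinuousOn (fun t => T' t x) (Set.Ioi 0))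
    (x Ax : X)
    (hgen : Filter.Tendsto (fun t => T' t x) (𝓝[>] 0) (𝓝 Ax))
    (t : ℝ) (ht : 0 < t) :
    T' t x = T t Ax ∧
    Filter.Tendsto (fun s => T' s (T t x)) (𝓝[>] 0) (𝓝 (T' t x)) :=
  conf_semigroup_deriv_commutes_general α hα T T' hlaw hderiv hcont x Ax hgen t ht
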